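/- Let 𝐌 : I^p → I^p be a mean-type mapping. If K : I^p → ℝ is an 𝐌-invariant mean on I, then there exists a p-limit-like function φ such that K(v) = φ(O*_𝐌(v)) for all v ∈ I^p. -/
import Mathlib


open Filter Set Topology

/-- `M` is a mean on the interval `I` (for `p`-tuples): its value is between the
minimum and the maximum of the arguments, for every tuple with entries in `I`. -/
def IsMean (I : Set ℝ) (p : ℕ) (M : (Fin p → ℝ) → ℝ) : Prop :=
  ∀ v : Fin p → ℝ, (∀ i, v i ∈ I) →
    sInf (Set.range v) ≤ M v ∧ M v ≤ sSup (Set.range v)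

/-- A mean-type mapping: every coordinate function is a mean on `I`, and it maps
`I^p` into `I^p`. -/
def IsMeanType (I : Set ℝ) (p : ℕ) (T : (Fin p → ℝ) → Fin p → ℝ) : Prop :=
  (∀ i, IsMean I p fun v => T v i) ∧
    ∀ v : Fin p → ℝ, (∀ i, v i ∈ I) → ∀ i, T v i ∈ I

/-- The unfolded orbit `O*_𝐌(v)`: the `(n*p + i)`-th term (`0 ≤ i < p`) is the
`i`-th coordinate of `𝐌ⁿ(v)`. -/
def orbitSeq (p : ℕ) (hp : 0 < p) (T : (Fin p → ℝ) → Fin p → ℝ)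
    (v : Fin p → ℝ) : ℕ → ℝ :=
  fun k => (T^[k / p] v) ⟨k % p, Nat.mod_lt k hp⟩

/-- A `p`-limit-like function: on every bounded sequence with values in `I` it is
invariant under shifting by `p` terms and lies between the `liminf` and the `limsup`. -/
def IsLimitLike (I : Set ℝ) (p : ℕ) (φ : (ℕ → ℝ) → ℝ) : Prop :=
  ∀ a : ℕ → ℝ, (∀ n, a n ∈ I) → BddBelow (Set.range a) → BddAbove (Set.range a) →
    φ a = φ (fun n => a (n + p)) ∧
    Filter.liminf a Filter.atTop ≤ φ a ∧
    φ a ≤ Filter.limsup a Filter.atTop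

section Aux

variable {p : ℕ}

lemma orbitSeq_coord (hp0 : 0 < p) (T : (Fin p → ℝ) → Fin p → ℝ)
    (v : Fin p → ℝ) (n : ℕ) (i : Fin p) :
    orbitSeq p hp0 T v (n * p + (i : ℕ)) = T^[n] v i := by
  have h1 : (n * p + (i : ℕ)) / p = n := by
    rw [mul_comm, Nat.mul_add_div hp0, Nat.div_eq_of_lt i.2, Nat.add_zero]
  have h2 : (n * p + (i : ℕ)) % p = i := by
    rw [mul_comm, Nat.mul_add_mod, Nat.mod_eq_of_lt i.2]
  simp only [orbitSeq, h1]
  exact congrArg _ (Fin.ext h2)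

lemma orbitSeq_zero (hp0 : 0 < p) (T : (Fin p → ℝ) → Fin p → ℝ)
    (v : Fin p → ℝ) (i : Fin p) :
    orbitSeq p hp0 T v (i : ℕ) = v i := by
  have := orbitSeq_coord hp0 T v 0 i
  simpa using this

end Aux

/-- Every `𝐌`-invariant mean `K` arises as `φ ∘ O*_𝐌` for some
`p`-limit-like function `φ`. -/
theorem invariant_mean_eq_limitLike_comp_orbit
    {I : Set ℝ} (hne : I.Nonempty) (hI : I.OrdConnected)
    {p : ℕ} (hp : 2 ≤ p)
    (T : (Fin p → ℝ) → Fin p → ℝ) (hT : IsMeanType I p T)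
    (K : (Fin p → ℝ) → ℝ) (hK : IsMean I p K)
    (hKinv : ∀ v : Fin p → ℝ, (∀ i, v i ∈ I) → K (T v) = K v) :
    ∃ φ : (ℕ → ℝ) → ℝ, IsLimitLike I p φ ∧
      ∀ v : Fin p → ℝ, (∀ i, v i ∈ I) → K v = φ (orbitSeq p (by omega) T v) := by
  classical
  have hp0 : 0 < p := by omega
  -- iterates stay in I
  have hIter : ∀ (v : Fin p → ℝ), (∀ i, v i ∈ I) → ∀ n, ∀ i, T^[n] v i ∈ I := by
    intro v hv n
    induction n with
    | zero => simpa using hv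
    | succ n ih =>
      intro i
      rw [Function.iterate_succ_apply']
      exact hT.2 _ ih i
  have hKIter : ∀ (v : Fin p → ℝ), (∀ i, v i ∈ I) → ∀ n, K (T^[n] v) = K v := by
    intro v hv n
    induction n with
    | zero => simp
    | succ n ih =>
      rw [Function.iterate_succ_apply', hKinv _ (hIter v hv n), ih]
  -- the "good" predicate: the tail of a starting at n*p is an orbit sequence
  set Good : (ℕ → ℝ) → ℕ → Prop := fun a n =>
    (∀ i : Fin p, a (n * p + (i : ℕ)) ∈ I) ∧
      ∀ k, a (n * p + k) = orbitSeq p hp0 T (fun i : Fin p => a (n * p + (i : ℕ))) k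
    with hGood
  -- seeds at different good indices give the same K-value
  have hWD : ∀ (a : ℕ → ℝ) (n₁ n₂ : ℕ), Good a n₁ → Good a n₂ →
      K (fun i : Fin p => a (n₁ * p + (i : ℕ))) = K (fun i : Fin p => a (n₂ * p + (i : ℕ))) := by
    have key : ∀ (a : ℕ → ℝ) (n₁ n₂ : ℕ), n₁ ≤ n₂ → Good a n₁ → Good a n₂ →
        K (fun i : Fin p => a (n₂ * p + (i : ℕ))) = K (fun i : Fin p => a (n₁ * p + (i : ℕ))) := by
      intro a n₁ n₂ hle h1 h2
      set v : Fin p → ℝ := fun i : Fin p => a (n₁ * p + (i : ℕ)) with hv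
      have hveq : (fun i : Fin p => a (n₂ * p + (i : ℕ))) = T^[n₂ - n₁] v := by
        funext i
        have harith : n₂ * p + (i : ℕ) = n₁ * p + ((n₂ - n₁) * p + (i : ℕ)) := by
          have : n₁ * p + (n₂ - n₁) * p = n₂ * p := by
            rw [← Nat.add_mul]; congr 1; omega
          omega
        rw [harith, h1.2, orbitSeq_coord]
      rw [hveq]
      exact hKIter v h1.1 _
    intro a n₁ n₂ h1 h2
    rcases le_total n₁ n₂ with h | h
    · exact (key a n₁ n₂ h h1 h2).symm
    · exact key a n₂ n₁ h h2 h1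
  -- the function φ
  set φ : (ℕ → ℝ) → ℝ := fun a =>
    if h : ∃ n, Good a n then K (fun i : Fin p => a (h.choose * p + (i : ℕ)))
    else Filter.limsup a Filter.atTop with hφ
  have hφval : ∀ (a : ℕ → ℝ) (n : ℕ), Good a n →
      φ a = K (fun i : Fin p => a (n * p + (i : ℕ))) := by
    intro a n hn
    have hex : ∃ n, Good a n := ⟨n, hn⟩
    simp only [hφ, dif_pos hex]
    exact hWD a hex.choose n hex.choose_spec hn
  -- Good propagates one step
  have hGoodSucc : ∀ (a : ℕ → ℝ) (n : ℕ), Good a n → Good a (n + 1) := by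
    intro a n hn
    set v : Fin p → ℝ := fun i : Fin p => a (n * p + (i : ℕ)) with hv
    have hTv : ∀ i : Fin p, a ((n + 1) * p + (i : ℕ)) = T v i := by
      intro i
      have harith : (n + 1) * p + (i : ℕ) = n * p + (1 * p + (i : ℕ)) := by ring
      rw [harith, hn.2]
      have := orbitSeq_coord hp0 T v 1 i
      simpa using this
    have hseed : (fun i : Fin p => a ((n + 1) * p + (i : ℕ))) = T v := funext hTv
    refine ⟨fun i => by rw [hTv i]; exact hT.2 v hn.1 i, fun k => ?_⟩
    have harith : (n + 1) * p + k = n * p + (p + k) := by ring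
    rw [harith, hn.2 (p + k), hseed]
    show orbitSeq p hp0 T v (p + k) = orbitSeq p hp0 T (T v) k
    simp only [orbitSeq]
    have h1 : (p + k) / p = k / p + 1 := by
      rw [Nat.add_comm p k, Nat.add_div_right _ hp0]
    have h2 : (p + k) % p = k % p := by
      rw [Nat.add_comm p k, Nat.add_mod_right]
    simp only [h1, Function.iterate_succ_apply]
    exact congrArg _ (Fin.ext h2)
  refine ⟨φ, ?_, ?_⟩
  · -- φ is limit-like
    intro a haI hbb hba
    set b : ℕ → ℝ := fun n => a (n + p) with hb
    have hshift : ∀ n k, b (n * p + k) = a ((n + 1) * p + k) := by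
      intro n k
      simp only [hb]
      congr 1
      ring
    have hGoodIff : ∀ n, Good b n ↔ Good a (n + 1) := by
      intro n
      constructor
      · intro h
        refine ⟨fun i => by rw [← hshift]; exact h.1 i, fun k => ?_⟩
        have := h.2 k
        rw [hshift] at this
        rw [this]
        congr 1
        funext i
        rw [← hshift]
      · intro h
        refine ⟨fun i => by rw [hshift]; exact h.1 i, fun k => ?_⟩
        rw [hshift, h.2 k]
        congr 1
        funext i
        rw [hshift]
    constructor
    · -- shift invariance
      by_cases hex : ∃ n, Good a n
      · obtain ⟨n, hn⟩ := hex
        have hGa : Good a (n + 1) := hGoodSucc a n hn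
        have hGb : Good b n := (hGoodIff n).2 hGa
        rw [hφval a n hn, hφval b n hGb]
        have heq : (fun i : Fin p => b (n * p + (i : ℕ)))
            = fun i : Fin p => a ((n + 1) * p + (i : ℕ)) := by
          funext i; exact hshift n i
        rw [heq]
        exact (hWD a (n + 1) n hGa hn).symm
      · have hexb : ¬ ∃ n, Good b n := by
          rintro ⟨n, hn⟩
          exact hex ⟨n + 1, (hGoodIff n).1 hn⟩
        simp only [hφ, dif_neg hex, dif_neg hexb]
        exact (Filter.limsup_nat_add a p).symm
    · -- bounds
      have hbdd_above : Filter.IsBoundedUnder (· ≤ ·) Filter.atTop a := by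
        obtain ⟨c, hc⟩ := hba
        exact Filter.isBoundedUnder_of ⟨c, fun k => hc (Set.mem_range_self k)⟩
      have hbdd_below : Filter.IsBoundedUnder (· ≥ ·) Filter.atTop a := by
        obtain ⟨c, hc⟩ := hbb
        exact Filter.isBoundedUnder_of ⟨c, fun k => hc (Set.mem_range_self k)⟩
      by_cases hex : ∃ n, Good a n
      · obtain ⟨n, hn⟩ := hex
        rw [hφval a n hn]
        set v : Fin p → ℝ := fun i : Fin p => a (n * p + (i : ℕ)) with hv
        have hvI : ∀ i, v i ∈ I := hn.1
        have hterm : ∀ m (i : Fin p), a (n * p + (m * p + (i : ℕ))) = T^[m] v i := by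
          intro m i
          rw [hn.2, orbitSeq_coord]
        have hfreq_le : ∃ᶠ k in Filter.atTop, K v ≤ a k := by
          rw [Filter.frequently_atTop]
          intro m
          have hw : ∀ i, T^[m] v i ∈ I := hIter v hvI m
          have hKle : K v ≤ sSup (Set.range (T^[m] v)) := by
            rw [← hKIter v hvI m]
            exact (hK _ hw).2
          have hfin : (Set.range (T^[m] v)).Finite := Set.finite_range _
          have hnonempty : (Set.range (T^[m] v)).Nonempty :=
            ⟨T^[m] v ⟨0, hp0⟩, Set.mem_range_self _⟩
          obtain ⟨i₀, hi₀⟩ := hnonempty.csSup_mem hfin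
          have hmle : m ≤ m * p := Nat.le_mul_of_pos_right m hp0
          refine ⟨n * p + (m * p + (i₀ : ℕ)), by omega, ?_⟩
          rw [hterm m i₀, hi₀]
          exact hKle
        have hfreq_ge : ∃ᶠ k in Filter.atTop, a k ≤ K v := by
          rw [Filter.frequently_atTop]
          intro m
          have hw : ∀ i, T^[m] v i ∈ I := hIter v hvI m
          have hKge : sInf (Set.range (T^[m] v)) ≤ K v := by
            rw [← hKIter v hvI m]
            exact (hK _ hw).1
          have hfin : (Set.range (T^[m] v)).Finite := Set.finite_range _
          have hnonempty : (Set.range (T^[m] v)).Nonempty :=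
            ⟨T^[m] v ⟨0, hp0⟩, Set.mem_range_self _⟩
          obtain ⟨i₀, hi₀⟩ := hnonempty.csInf_mem hfin
          have hmle : m ≤ m * p := Nat.le_mul_of_pos_right m hp0
          refine ⟨n * p + (m * p + (i₀ : ℕ)), by omega, ?_⟩
          rw [hterm m i₀, hi₀]
          exact hKge
        exact ⟨Filter.liminf_le_of_frequently_le hfreq_ge hbdd_below,
          Filter.le_limsup_of_frequently_le hfreq_le hbdd_above⟩
      · simp only [hφ, dif_neg hex]
        exact ⟨Filter.liminf_le_limsup hbdd_above hbdd_below, le_refl _⟩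
  · -- K v = φ (orbitSeq v)
    intro v hv
    have hG : Good (orbitSeq p hp0 T v) 0 := by
      have hseed : (fun i : Fin p => orbitSeq p hp0 T v (0 * p + (i : ℕ))) = v := by
        funext i
        simpa using orbitSeq_zero hp0 T v i
      constructor
      · intro i
        rw [show (0 : ℕ) * p + (i : ℕ) = (i : ℕ) by ring, orbitSeq_zero hp0 T v i]
        exact hv i
      · intro k
        rw [hseed]
        simp
    have := hφval (orbitSeq p hp0 T v) 0 hG
    rw [this]
    congr 1
    funext i
    rw [show (0 : ℕ) * p + (i : ℕ) = (i : ℕ) by ring, orbitSeq_zero hp0 T v i]
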